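/- Let U ⊆ ℝ² be an open set of pairs (v, λ) on which g(v,λ) := v(v−1)(v−λ) > 0 and v ≠ λ. Define f(v,λ) = g(v,λ)^{−1/2} and h(v,λ) = √(g(v,λ)) / (2(v−λ)²). Then on U: λ(1−λ)·∂²f/∂λ² + (1−2λ)·∂f/∂λ − (1/4)f = ∂h/∂v. -/

import Mathlib

noncomputable def legG (v lam : ℝ) : ℝ := v * (v - 1) * (v - lam)
noncomputable def legF (v lam : ℝ) : ℝ := 1 / Real.sqrt (legG v lam)
noncomputable def legH (v lam : ℝ) : ℝ := Real.sqrt (legG v lam) / (2 * (v - lam)^2)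

lemma legG_hasDerivAt (v y : ℝ) :
    HasDerivAt (fun y' => legG v y') (-(v * (v - 1))) y := by
  have h : HasDerivAt (fun y' : ℝ => v * (v - 1) * (v - y')) (v * (v - 1) * (-1)) y :=
    ((hasDerivAt_id y).const_sub v).const_mul _
  simpa [legG] using h

lemma legF_hasDerivAt (v y : ℝ) (h : 0 < legG v y) :
    HasDerivAt (fun y' => legF v y')
      (v * (v - 1) / (2 * (legG v y * Real.sqrt (legG v y)))) y := by
  have hs : Real.sqrt (legG v y) ≠ 0 := (Real.sqrt_pos.mpr h).ne'
  have hss : Real.sqrt (legG v y) ^ 2 = legG v y := Real.sq_sqrt h.le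
  have h1 : HasDerivAt (fun y' => Real.sqrt (legG v y'))
      (-(v * (v - 1)) / (2 * Real.sqrt (legG v y))) y :=
    (legG_hasDerivAt v y).sqrt h.ne'
  have h2 := h1.inv hs
  have h3 : (fun y' => legF v y') = fun y' => (Real.sqrt (legG v y'))⁻¹ := by
    funext y'; simp [legF, one_div]
  rw [h3]
  refine h2.congr_deriv ?_
  field_simp
  rw [hss]

lemma legF1_hasDerivAt (v y : ℝ) (h : 0 < legG v y) :
    HasDerivAt (fun y' => v * (v - 1) / (2 * (legG v y' * Real.sqrt (legG v y'))))
      (3 * (v * (v - 1))^2 / (4 * ((legG v y)^2 * Real.sqrt (legG v y)))) y := by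
  have hs : Real.sqrt (legG v y) ≠ 0 := (Real.sqrt_pos.mpr h).ne'
  have hss : Real.sqrt (legG v y) ^ 2 = legG v y := Real.sq_sqrt h.le
  have hG := legG_hasDerivAt v y
  have h1 : HasDerivAt (fun y' => Real.sqrt (legG v y'))
      (-(v * (v - 1)) / (2 * Real.sqrt (legG v y))) y := hG.sqrt h.ne'
  have hu : HasDerivAt (fun y' => 2 * (legG v y' * Real.sqrt (legG v y')))
      (2 * (-(v * (v - 1)) * Real.sqrt (legG v y)
        + legG v y * (-(v * (v - 1)) / (2 * Real.sqrt (legG v y))))) y :=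
    (hG.mul h1).const_mul 2
  have hune : 2 * (legG v y * Real.sqrt (legG v y)) ≠ 0 := by positivity
  have h2 := (hasDerivAt_const y (v * (v - 1))).div hu hune
  refine h2.congr_deriv ?_
  field_simp
  ring_nf
  linear_combination (-4 * (v^2 - 2*v^3 + v^4)) * hss

lemma legH_hasDerivAt (v lam : ℝ) (h : 0 < legG v lam) (hvl : v - lam ≠ 0) :
    HasDerivAt (fun w => legH w lam)
      (((((v - 1) * (v - lam) + v * (v - lam) + v * (v - 1)) / (2 * Real.sqrt (legG v lam)))
          * (2 * (v - lam) ^ 2)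
        - Real.sqrt (legG v lam) * (2 * (2 * (v - lam) ^ 1 * 1)))
        / (2 * (v - lam) ^ 2) ^ 2) v := by
  have hP0 := ((hasDerivAt_id v).mul ((hasDerivAt_id v).sub_const 1)).mul
      ((hasDerivAt_id v).sub_const lam)
  have hP : HasDerivAt (fun w => legG w lam)
      ((v - 1) * (v - lam) + v * (v - lam) + v * (v - 1)) v := by
    refine hP0.congr_deriv ?_
    simp; ring
  have hsq : HasDerivAt (fun w => Real.sqrt (legG w lam))
      (((v - 1) * (v - lam) + v * (v - lam) + v * (v - 1)) / (2 * Real.sqrt (legG v lam))) v :=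
    hP.sqrt h.ne'
  have hden : HasDerivAt (fun w : ℝ => 2 * (w - lam) ^ 2) (2 * (2 * (v - lam) ^ 1 * 1)) v :=
    (((hasDerivAt_id v).sub_const lam).pow 2).const_mul 2
  have hdne : 2 * (v - lam) ^ 2 ≠ 0 := by positivity
  exact hsq.div hden hdne

/-- The exactness identity behind the Picard-Fuchs equation of the Legendre family. -/
theorem legendre_picard_fuchs_exactness (U : Set (ℝ × ℝ)) (hU : IsOpen U)
    (hpos : ∀ x ∈ U, 0 < legG x.1 x.2) (hne : ∀ x ∈ U, x.1 ≠ x.2)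
    (v lam : ℝ) (hmem : (v, lam) ∈ U) :
    lam * (1 - lam) * deriv (fun y => deriv (fun y' => legF v y') y) lam
      + (1 - 2 * lam) * deriv (fun y => legF v y) lam
      - (1/4) * legF v lam
    = deriv (fun w => legH w lam) v := by
  have hg : 0 < legG v lam := hpos _ hmem
  have hvl : v - lam ≠ 0 := by
    intro h0
    rw [legG, h0, mul_zero] at hg
    exact lt_irrefl 0 hg
  have hs : Real.sqrt (legG v lam) ≠ 0 := (Real.sqrt_pos.mpr hg).ne'
  have hss : Real.sqrt (legG v lam) ^ 2 = legG v lam := Real.sq_sqrt hg.le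
  have hd1 : deriv (fun y => legF v y) lam
      = v * (v - 1) / (2 * (legG v lam * Real.sqrt (legG v lam))) :=
    (legF_hasDerivAt v lam hg).deriv
  have hcont : Continuous fun y => legG v y := by
    unfold legG; continuity
  have hev : ∀ᶠ y in nhds lam, 0 < legG v y :=
    (isOpen_lt continuous_const hcont).mem_nhds hg
  have heq : (fun y => deriv (fun y' => legF v y') y)
      =ᶠ[nhds lam] fun y => v * (v - 1) / (2 * (legG v y * Real.sqrt (legG v y))) :=
    hev.mono fun y hy => (legF_hasDerivAt v y hy).deriv
  have hd2 : deriv (fun y => deriv (fun y' => legF v y') y) lam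
      = 3 * (v * (v - 1)) ^ 2 / (4 * ((legG v lam) ^ 2 * Real.sqrt (legG v lam))) := by
    rw [heq.deriv_eq]
    exact (legF1_hasDerivAt v lam hg).deriv
  have hdH : deriv (fun w => legH w lam) v
      = ((((v - 1) * (v - lam) + v * (v - lam) + v * (v - 1)) / (2 * Real.sqrt (legG v lam)))
          * (2 * (v - lam) ^ 2)
        - Real.sqrt (legG v lam) * (2 * (2 * (v - lam) ^ 1 * 1)))
        / (2 * (v - lam) ^ 2) ^ 2 :=
    (legH_hasDerivAt v lam hg hvl).deriv
  rw [hd1, hd2, hdH, legF]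
  have hgne : legG v lam ≠ 0 := hg.ne'
  have hged : legG v lam = v * (v - 1) * (v - lam) := rfl
  set g := legG v lam with hgdef
  set s := Real.sqrt g with hsdef
  clear_value s g
  clear hgdef hsdef hd1 hd2 hdH heq hev hcont
  subst hged
  refine mul_right_cancel₀ hs ?_
  have hv0 : v ≠ 0 := by rintro rfl; simp at hgne
  have hv1 : v - 1 ≠ 0 := by intro h1; rw [h1] at hgne; simp at hgne
  field_simp
  ring_nf
  linear_combination 16 * hss
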